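/- Let W have density N e^{−w}(1−e^{−w})^{N−1} on [0,∞) (max of N i.i.d. exp(1)), and let X have the density (N/(N−1)) Σ_{k=1}^{N−1} C(N−1,k−1) e^{−x(N−k+1)}(1−e^{−x})^{k−1}, independent of W. Then for a, b > 0, P[W > a + X/b] = (N/(N−1)) Σ_{k=1}^{N−1} C(N−1,k−1)[I₁ − I₂], where I₁ = Σ_{m=0}^{k−1} C(k−1,m)(−1)^m/(N−k+m+1) and I₂ = Σ_{m=0}^{k−1} Σ_{ℓ=0}^{N} C(k−1,m)C(N,ℓ)(−1)^{m+ℓ}e^{−aℓ}/(N−k+m+ℓ/b+1). -/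

import Mathlib

/-!
Since `P[W > c] = 1 - (1 - e^{-c})^N`, expanding this survival function and the density of `X`
by the binomial theorem turns the integrand into a finite combination of decaying exponentials
`e^{-r x}`, each of which integrates to `1 / r` over `(0, ∞)`.
-/

open MeasureTheory Real Finset

/-- `P[W > c]` for `W` the maximum of `N` i.i.d. `Exp(1)` variables. -/
noncomputable def maxExpSurvival (N : ℕ) (c : ℝ) : ℝ := 1 - (1 - exp (-c)) ^ N

lemma integral_exp_neg_mul_Ioi_zero {r : ℝ} (hr : 0 < r) :
    ∫ x in Set.Ioi (0 : ℝ), exp (-r * x) = 1 / r := by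
  rw [integral_exp_mul_Ioi (neg_neg_iff_pos.2 hr), mul_zero, exp_zero, div_neg, neg_div, neg_neg]

lemma one_sub_exp_neg_pow (y : ℝ) (n : ℕ) :
    (1 - exp (-y)) ^ n = ∑ l ∈ range (n + 1), (n.choose l : ℝ) * (-1) ^ l * exp (-l * y) := by
  rw [sub_eq_neg_add, add_pow]
  refine sum_congr rfl fun l _ => ?_
  rw [neg_pow, ← exp_nat_mul, one_pow, mul_one, neg_mul, mul_neg]
  ring

lemma integral_Ioi_deriv_one_sub_exp_neg_pow (N : ℕ) {c : ℝ} (hc : 0 ≤ c) :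
    ∫ w in Set.Ioi c, (N : ℝ) * exp (-w) * (1 - exp (-w)) ^ (N - 1) = maxExpSurvival N c := by
  have hderiv : ∀ w ∈ Set.Ici c, HasDerivAt (fun w => (1 - exp (-w)) ^ N)
      ((N : ℝ) * exp (-w) * (1 - exp (-w)) ^ (N - 1)) w := fun w _ =>
    ((((hasDerivAt_neg w).exp).const_sub 1).fun_pow N).congr_deriv (by ring)
  have hnonneg : ∀ w ∈ Set.Ioi c, 0 ≤ (N : ℝ) * exp (-w) * (1 - exp (-w)) ^ (N - 1) :=
    fun w hw => by
      have : exp (-w) ≤ 1 := exp_le_one_iff.2 (by linarith [hw.out])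
      have : 0 ≤ 1 - exp (-w) := by linarith
      positivity
  have hlim : Filter.Tendsto (fun w => (1 - exp (-w)) ^ N) Filter.atTop (nhds 1) := by
    simpa using ((tendsto_exp_neg_atTop_nhds_zero.const_sub 1).pow N)
  exact integral_Ioi_of_hasDerivAt_of_nonneg' hderiv hnonneg hlim

lemma maxExpSurvival_mul_exp (N : ℕ) (a b s x : ℝ) :
    maxExpSurvival N (a + x / b) * exp (-s * x) = exp (-s * x) - ∑ l ∈ range (N + 1),
      (N.choose l : ℝ) * (-1) ^ l * exp (-a * l) * exp (-(s + l / b) * x) := by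
  rw [maxExpSurvival, one_sub_exp_neg_pow, sub_mul, one_mul, sum_mul]
  congr 1
  refine sum_congr rfl fun l _ => ?_
  rw [mul_assoc, mul_assoc _ (exp _), ← exp_add, ← exp_add]
  ring_nf

lemma exp_mul_one_sub_exp_neg_pow (r x : ℝ) (j : ℕ) :
    exp (-x * r) * (1 - exp (-x)) ^ j =
      ∑ m ∈ range (j + 1), (j.choose m : ℝ) * (-1) ^ m * exp (-(r + m) * x) := by
  rw [one_sub_exp_neg_pow, mul_sum]
  refine sum_congr rfl fun m _ => ?_
  rw [mul_left_comm, ← exp_add]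
  ring_nf

lemma maxExpSurvival_mul_exp_mul_one_sub_exp_neg_pow (N : ℕ) (a b r x : ℝ) (j : ℕ) :
    maxExpSurvival N (a + x / b) * (exp (-x * r) * (1 - exp (-x)) ^ j) =
      ∑ m ∈ range (j + 1), (j.choose m : ℝ) * (-1) ^ m *
        (maxExpSurvival N (a + x / b) * exp (-(r + m) * x)) := by
  rw [exp_mul_one_sub_exp_neg_pow, mul_sum]
  exact sum_congr rfl fun m _ => by ring

section

variable (N : ℕ) (a : ℝ) {b : ℝ} (hb : 0 ≤ b)
include hb

lemma integrableOn_maxExpSurvival_mul_exp {s : ℝ} (hs : 0 < s) :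
    IntegrableOn (fun x => maxExpSurvival N (a + x / b) * exp (-s * x)) (Set.Ioi 0) := by
  simp_rw [maxExpSurvival_mul_exp]
  refine (exp_neg_integrableOn_Ioi 0 hs).sub (integrable_finsetSum _ fun l _ => ?_)
  exact (exp_neg_integrableOn_Ioi 0 (by positivity)).const_mul _

lemma integral_maxExpSurvival_mul_exp {s : ℝ} (hs : 0 < s) :
    ∫ x in Set.Ioi 0, maxExpSurvival N (a + x / b) * exp (-s * x) = 1 / s - ∑ l ∈ range (N + 1),
      (N.choose l : ℝ) * (-1) ^ l * exp (-a * l) / (s + l / b) := by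
  have hrate (l : ℕ) : 0 < s + l / b := by positivity
  have hint (l : ℕ) := (exp_neg_integrableOn_Ioi 0 (hrate l)).const_mul
    ((N.choose l : ℝ) * (-1) ^ l * exp (-a * l))
  simp_rw [maxExpSurvival_mul_exp]
  rw [integral_sub (exp_neg_integrableOn_Ioi 0 hs) (integrable_finsetSum _ fun l _ => hint l),
    integral_finsetSum _ fun l _ => hint l, integral_exp_neg_mul_Ioi_zero hs]
  congr 1
  refine sum_congr rfl fun l _ => ?_
  rw [integral_const_mul, integral_exp_neg_mul_Ioi_zero (hrate l), mul_one_div]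

lemma integrableOn_maxExpSurvival_mul_exp_mul_one_sub_exp_neg_pow {r : ℝ} (hr : 0 < r) (j : ℕ) :
    IntegrableOn (fun x => maxExpSurvival N (a + x / b) * (exp (-x * r) * (1 - exp (-x)) ^ j))
      (Set.Ioi 0) := by
  simp_rw [maxExpSurvival_mul_exp_mul_one_sub_exp_neg_pow]
  exact integrable_finsetSum _ fun m _ =>
    (integrableOn_maxExpSurvival_mul_exp N a hb (by positivity)).const_mul _

lemma integral_maxExpSurvival_mul_exp_mul_one_sub_exp_neg_pow {r : ℝ} (hr : 0 < r) (j : ℕ) :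
    ∫ x in Set.Ioi 0, maxExpSurvival N (a + x / b) * (exp (-x * r) * (1 - exp (-x)) ^ j) =
      ∑ m ∈ range (j + 1), (j.choose m : ℝ) * (-1) ^ m * (1 / (r + m) -
        ∑ l ∈ range (N + 1), (N.choose l : ℝ) * (-1) ^ l * exp (-a * l) / (r + m + l / b)) := by
  have hrate (m : ℕ) : 0 < r + m := by positivity
  simp_rw [maxExpSurvival_mul_exp_mul_one_sub_exp_neg_pow]
  rw [integral_finsetSum _ fun m _ =>
    (integrableOn_maxExpSurvival_mul_exp N a hb (hrate m)).const_mul _]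
  refine sum_congr rfl fun m _ => ?_
  rw [integral_const_mul, integral_maxExpSurvival_mul_exp N a hb (hrate m)]

end

theorem fr_EP_BPL_general (N : ℕ) (a b : ℝ) (ha : 0 < a) (hb : 0 < b) :
    ∫ x in Set.Ioi (0 : ℝ),
        (∫ w in Set.Ioi (a + x / b),
            (N : ℝ) * Real.exp (-w) * (1 - Real.exp (-w)) ^ (N - 1)) *
          (((N : ℝ) / ((N : ℝ) - 1)) * ∑ k ∈ Finset.Icc 1 (N - 1),
            (Nat.choose (N - 1) (k - 1) : ℝ) * Real.exp (-x * ((N : ℝ) - k + 1)) *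
              (1 - Real.exp (-x)) ^ (k - 1))
      = ((N : ℝ) / ((N : ℝ) - 1)) * ∑ k ∈ Finset.Icc 1 (N - 1),
          (Nat.choose (N - 1) (k - 1) : ℝ) *
            ((∑ m ∈ Finset.range k,
                (Nat.choose (k - 1) m : ℝ) * (-1) ^ m / ((N : ℝ) - k + m + 1))
              - ∑ m ∈ Finset.range k, ∑ l ∈ Finset.range (N + 1),
                  (Nat.choose (k - 1) m : ℝ) * (Nat.choose N l : ℝ) * (-1) ^ (m + l) *
                    Real.exp (-a * l) / ((N : ℝ) - k + m + (l : ℝ) / b + 1)) := by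
  have hrate : ∀ k ∈ Icc 1 (N - 1), 0 < (N : ℝ) - k + 1 := fun k hk => by
    have : (k : ℝ) < N := by exact_mod_cast (by grind : k < N)
    linarith
  have hintegrand : ∀ x ∈ Set.Ioi (0 : ℝ),
      (∫ w in Set.Ioi (a + x / b), (N : ℝ) * exp (-w) * (1 - exp (-w)) ^ (N - 1)) *
          ((N / (N - 1)) * ∑ k ∈ Icc 1 (N - 1), (Nat.choose (N - 1) (k - 1) : ℝ) *
            exp (-x * (N - k + 1)) * (1 - exp (-x)) ^ (k - 1)) =
        N / (N - 1) * ∑ k ∈ Icc 1 (N - 1), (Nat.choose (N - 1) (k - 1) : ℝ) *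
          (maxExpSurvival N (a + x / b) * (exp (-x * (N - k + 1)) * (1 - exp (-x)) ^ (k - 1))) :=
    fun x hx => by
      rw [integral_Ioi_deriv_one_sub_exp_neg_pow N (by have := hx.out; positivity), mul_sum,
        mul_sum, mul_sum]
      exact sum_congr rfl fun k _ => by ring
  rw [setIntegral_congr_fun measurableSet_Ioi hintegrand, integral_const_mul,
    integral_finsetSum _ fun k hk => .const_mul
      (integrableOn_maxExpSurvival_mul_exp_mul_one_sub_exp_neg_pow N a hb.le (hrate k hk) _) _]
  congr 1
  refine sum_congr rfl fun k hk => ?_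
  rw [integral_const_mul,
    integral_maxExpSurvival_mul_exp_mul_one_sub_exp_neg_pow N a hb.le (hrate k hk),
    Nat.sub_add_cancel (mem_Icc.1 hk).1, ← sum_sub_distrib]
  congr 1
  refine sum_congr rfl fun m _ => ?_
  rw [mul_sub, mul_sum]
  congr 1
  · ring
  · exact sum_congr rfl fun l _ => by ring

/-- EP-BPL relay success probability (Lemma 2, Eq. (25)): W has the max-of-N-exp(1) density
and X the averaged order-statistic density, independent; then for a, b > 0,
P[W > a + X/b] = (N/(N−1)) Σ_{k=1}^{N−1} C(N−1,k−1)[I₁ − I₂]. -/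
theorem fr_EP_BPL (N : ℕ) (hN : 2 ≤ N) (a b : ℝ) (ha : 0 < a) (hb : 0 < b) :
    ∫ x in Set.Ioi (0 : ℝ),
        (∫ w in Set.Ioi (a + x / b),
            (N : ℝ) * Real.exp (-w) * (1 - Real.exp (-w)) ^ (N - 1)) *
          (((N : ℝ) / ((N : ℝ) - 1)) * ∑ k ∈ Finset.Icc 1 (N - 1),
            (Nat.choose (N - 1) (k - 1) : ℝ) * Real.exp (-x * ((N : ℝ) - k + 1)) *
              (1 - Real.exp (-x)) ^ (k - 1))
      = ((N : ℝ) / ((N : ℝ) - 1)) * ∑ k ∈ Finset.Icc 1 (N - 1),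
          (Nat.choose (N - 1) (k - 1) : ℝ) *
            ((∑ m ∈ Finset.range k,
                (Nat.choose (k - 1) m : ℝ) * (-1) ^ m / ((N : ℝ) - k + m + 1))
              - ∑ m ∈ Finset.range k, ∑ l ∈ Finset.range (N + 1),
                  (Nat.choose (k - 1) m : ℝ) * (Nat.choose N l : ℝ) * (-1) ^ (m + l) *
                    Real.exp (-a * l) / ((N : ℝ) - k + m + (l : ℝ) / b + 1)) :=
  fr_EP_BPL_general N a b ha hb
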